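/- arXiv:0909.2420 — 2 statements merged into one kernel-verified Lean document; each statement's English description precedes it below -/
import Mathlib

section
/- For all real numbers x, y in the interval [0, π/2], cos(√(x² + y²)) ≤ cos(x)·cos(y). -/
/-!
The function `t ↦ cos √t` is convex on `[0, π²]`: its second derivative has the sign of
`sin s - s cos s` with `s = √t ∈ [0, π]`, which is nonnegative. Since `x² + y²` is the midpoint of
`(x + y)²` and `(x - y)²`, convexity gives
`cos √(x² + y²) ≤ (cos (x + y) + cos (x - y)) / 2 = cos x cos y`.
-/

open Real Set

lemma mul_cos_le_sin {x : ℝ} (h0 : 0 ≤ x) (hπ : x ≤ π) : x * cos x ≤ sin x := by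
  rcases lt_or_ge x (π / 2) with hlt | hge
  · have hcos : 0 < cos x := cos_pos_of_mem_Ioo ⟨by linarith [pi_pos], hlt⟩
    have htan := le_tan h0 hlt
    rwa [tan_eq_sin_div_cos, le_div_iff₀ hcos] at htan
  · have hcos : cos x ≤ 0 := cos_nonpos_of_pi_div_two_le_of_le hge (by linarith)
    have hsin : 0 ≤ sin x := sin_nonneg_of_nonneg_of_le_pi h0 hπ
    nlinarith

lemma hasDerivAt_cos_sqrt {t : ℝ} (ht : 0 < t) :
    HasDerivAt (fun t => cos √t) (-sin √t / (2 * √t)) t :=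
  (hasDerivAt_sqrt ht.ne').cos.congr_deriv (by ring)

lemma hasDerivAt_neg_sin_sqrt_div {t : ℝ} (ht : 0 < t) :
    HasDerivAt (fun t => -sin √t / (2 * √t)) ((sin √t - √t * cos √t) / (4 * √t ^ 3)) t := by
  have hsqrt := hasDerivAt_sqrt ht.ne'
  have hpos : 0 < √t := sqrt_pos.mpr ht
  refine (hsqrt.sin.fun_neg.div (hsqrt.const_mul 2) (by positivity)).congr_deriv ?_
  field_simp
  ring

lemma convexOn_cos_sqrt : ConvexOn ℝ (Icc 0 (π ^ 2)) (fun t => cos √t) := by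
  refine convexOn_of_hasDerivWithinAt2_nonneg (convex_Icc _ _)
    (f' := fun t => -sin √t / (2 * √t)) (f'' := fun t => (sin √t - √t * cos √t) / (4 * √t ^ 3))
    (continuous_cos.comp continuous_sqrt).continuousOn
    (fun t ht => ?_) (fun t ht => ?_) (fun t ht => ?_) <;>
    rw [interior_Icc] at ht
  · exact (hasDerivAt_cos_sqrt ht.1).hasDerivWithinAt
  · exact (hasDerivAt_neg_sin_sqrt_div ht.1).hasDerivWithinAt
  · have hle : √t ≤ π := by
      simpa [sqrt_sq pi_pos.le] using sqrt_le_sqrt ht.2.le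
    have hnum := mul_cos_le_sin (sqrt_nonneg t) hle
    exact div_nonneg (by linarith) (by positivity)

lemma cos_sqrt_sq (a : ℝ) : cos √(a ^ 2) = cos a := by
  rw [sqrt_sq_eq_abs, cos_abs]

theorem cos_sqrt_sq_add_sq_le (x y : ℝ) (hx : x ∈ Set.Icc 0 (Real.pi / 2))
    (hy : y ∈ Set.Icc 0 (Real.pi / 2)) :
    Real.cos (Real.sqrt (x ^ 2 + y ^ 2)) ≤ Real.cos x * Real.cos y := by
  obtain ⟨hx0, hx1⟩ := hx
  obtain ⟨hy0, hy1⟩ := hy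
  have hsum : (x + y) ^ 2 ∈ Icc 0 (π ^ 2) := ⟨by positivity, by nlinarith⟩
  have hdiff : (x - y) ^ 2 ∈ Icc 0 (π ^ 2) := ⟨by positivity, by nlinarith [pi_pos]⟩
  have key := convexOn_cos_sqrt.2 hsum hdiff one_half_pos.le one_half_pos.le (add_halves 1)
  calc cos √(x ^ 2 + y ^ 2)
      = cos √((1 / 2 : ℝ) • (x + y) ^ 2 + (1 / 2 : ℝ) • (x - y) ^ 2) := by
        simp only [smul_eq_mul]; ring_nf
    _ ≤ 1 / 2 * cos (x + y) + 1 / 2 * cos (x - y) := by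
        simpa only [smul_eq_mul, cos_sqrt_sq] using key
    _ = cos x * cos y := by rw [cos_add, cos_sub]; ring
end

section
/- Let α be an m×m real matrix with singular values λ₁,…,λ_m, all lying in [0,1]. Then |det α| = ∏ᵢ λᵢ and hence arccos|det α| ≤ √(∑ᵢ arccos²(λᵢ)). -/
/-!
Since `|det α|² = det (α αᵀ) = ∏ λᵢ²`, the identity is immediate. The inequality reduces, by
induction on the number of factors, to `arccos (x y) ≤ √(arccos² x + arccos² y)`. With
`a = arccos x` and `b = arccos y` this says
`cos √(a² + b²) ≤ cos a cos b = (cos (a - b) + cos (a + b)) / 2`,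
which is midpoint convexity of `t ↦ cos √t` on `[0, π²]` at the points `(a - b)²` and
`(a + b)²`; the second derivative of `cos √t` is `(sin s - s cos s) / (4 s³)` with `s = √t`.
-/

open Matrix Real Set

namespace Real

lemma mul_cos_le_sin {s : ℝ} (hs₀ : 0 ≤ s) (hsπ : s ≤ π) : s * cos s ≤ sin s := by
  rcases le_or_gt (cos s) 0 with hcos | hcos
  · nlinarith [sin_nonneg_of_nonneg_of_le_pi hs₀ hsπ]
  · have hs : s < π / 2 := by
      by_contra! hs
      linarith [cos_nonpos_of_pi_div_two_le_of_le hs (by linarith [pi_pos])]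
    have := le_tan hs₀ hs
    rwa [tan_eq_sin_div_cos, le_div_iff₀ hcos] at this

lemma hasDerivAt_cos_sqrt {t : ℝ} (ht : 0 < t) :
    HasDerivAt (fun t => cos √t) (-sin √t / (2 * √t)) t := by
  refine ((hasDerivAt_cos √t).comp t (hasDerivAt_sqrt ht.ne')).congr_deriv ?_
  field_simp

lemma hasDerivAt_neg_sin_sqrt_div {t : ℝ} (ht : 0 < t) :
    HasDerivAt (fun t => -sin √t / (2 * √t)) ((sin √t - √t * cos √t) / (4 * t * √t)) t := by
  have hsqrt := hasDerivAt_sqrt ht.ne'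
  have hnum := ((hasDerivAt_sin √t).comp t hsqrt).neg
  refine (hnum.div (hsqrt.const_mul 2) (by positivity)).congr_deriv ?_
  have hsq : √t ^ 2 = t := sq_sqrt ht.le
  field_simp
  simp only [Pi.neg_apply, Function.comp_apply, hsq]
  ring

lemma convexOn_cos_sqrt : ConvexOn ℝ (Icc 0 (π ^ 2)) (fun t => cos √t) := by
  refine convexOn_of_hasDerivWithinAt2_nonneg (f' := fun t => -sin √t / (2 * √t))
    (f'' := fun t => (sin √t - √t * cos √t) / (4 * t * √t)) (convex_Icc _ _)
    (continuous_cos.comp continuous_sqrt).continuousOn ?_ ?_ ?_ <;>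
    rw [interior_Icc] <;> rintro t ⟨ht₀, htπ⟩
  · exact (hasDerivAt_cos_sqrt ht₀).hasDerivWithinAt
  · exact (hasDerivAt_neg_sin_sqrt_div ht₀).hasDerivWithinAt
  · have hsπ : √t ≤ π := (sqrt_le_left pi_pos.le).mpr htπ.le
    have := mul_cos_le_sin (sqrt_nonneg t) hsπ
    have : 0 < √t := sqrt_pos.2 ht₀
    exact div_nonneg (by linarith) (by positivity)

lemma cos_sqrt_sq_add_sq_le_cos_mul_cos {a b : ℝ} (ha : a ∈ Icc 0 (π / 2))
    (hb : b ∈ Icc 0 (π / 2)) : cos √(a ^ 2 + b ^ 2) ≤ cos a * cos b := by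
  obtain ⟨ha₀, haπ⟩ := ha
  obtain ⟨hb₀, hbπ⟩ := hb
  have hsub : (a - b) ^ 2 ∈ Icc 0 (π ^ 2) := ⟨sq_nonneg _, by nlinarith⟩
  have hadd : (a + b) ^ 2 ∈ Icc 0 (π ^ 2) := ⟨sq_nonneg _, by nlinarith⟩
  have hmid := convexOn_cos_sqrt.2 hsub hadd (by norm_num : (0 : ℝ) ≤ 1 / 2)
    (by norm_num : (0 : ℝ) ≤ 1 / 2) (by norm_num)
  simp only [smul_eq_mul, sqrt_sq_eq_abs, cos_abs] at hmid
  calc cos √(a ^ 2 + b ^ 2) = cos √(1 / 2 * (a - b) ^ 2 + 1 / 2 * (a + b) ^ 2) := by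
        ring_nf
    _ ≤ 1 / 2 * cos (a - b) + 1 / 2 * cos (a + b) := hmid
    _ = cos a * cos b := by rw [cos_sub, cos_add]; ring

lemma arccos_mul_le_sqrt {x y : ℝ} (hx : x ∈ Icc 0 1) (hy : y ∈ Icc 0 1) :
    arccos (x * y) ≤ √(arccos x ^ 2 + arccos y ^ 2) := by
  have ha : arccos x ∈ Icc 0 (π / 2) := ⟨arccos_nonneg x, arccos_le_pi_div_two.2 hx.1⟩
  have hb : arccos y ∈ Icc 0 (π / 2) := ⟨arccos_nonneg y, arccos_le_pi_div_two.2 hy.1⟩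
  have hxy : cos √(arccos x ^ 2 + arccos y ^ 2) ≤ x * y := by
    simpa only [cos_arccos (by linarith [hx.1]) hx.2, cos_arccos (by linarith [hy.1]) hy.2]
      using cos_sqrt_sq_add_sq_le_cos_mul_cos ha hb
  have hπ : √(arccos x ^ 2 + arccos y ^ 2) ≤ π := by
    refine (sqrt_le_left pi_pos.le).mpr ?_
    nlinarith [ha.1, ha.2, hb.1, hb.2]
  calc arccos (x * y) ≤ arccos (cos √(arccos x ^ 2 + arccos y ^ 2)) := arccos_le_arccos hxy
    _ = √(arccos x ^ 2 + arccos y ^ 2) := arccos_cos (sqrt_nonneg _) hπ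

lemma arccos_prod_le_sqrt_sum {ι : Type*} (s : Finset ι) (f : ι → ℝ)
    (hf : ∀ i ∈ s, f i ∈ Icc 0 1) :
    arccos (∏ i ∈ s, f i) ≤ √(∑ i ∈ s, arccos (f i) ^ 2) := by
  induction s using Finset.cons_induction with
  | empty => simp [arccos_one]
  | cons a s has ih =>
    have hs : ∀ i ∈ s, f i ∈ Icc 0 1 := fun i hi => hf i (Finset.mem_cons_of_mem hi)
    have hprod : ∏ i ∈ s, f i ∈ Icc 0 1 :=
      ⟨Finset.prod_nonneg fun i hi => (hs i hi).1,
        Finset.prod_le_one (fun i hi => (hs i hi).1) (fun i hi => (hs i hi).2)⟩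
    have hsq : arccos (∏ i ∈ s, f i) ^ 2 ≤ ∑ i ∈ s, arccos (f i) ^ 2 :=
      (sq_le_sq₀ (arccos_nonneg _) (sqrt_nonneg _)).2 (ih hs) |>.trans_eq
        (sq_sqrt (Finset.sum_nonneg fun i _ => sq_nonneg _))
    rw [Finset.prod_cons, Finset.sum_cons]
    calc arccos (f a * ∏ i ∈ s, f i)
        ≤ √(arccos (f a) ^ 2 + arccos (∏ i ∈ s, f i) ^ 2) :=
          arccos_mul_le_sqrt (hf a (Finset.mem_cons_self a s)) hprod
      _ ≤ √(arccos (f a) ^ 2 + ∑ i ∈ s, arccos (f i) ^ 2) := by gcongr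

end Real

lemma Matrix.abs_det_eq_prod_of_sq_eq_eigenvalues {n : Type*} [Fintype n] [DecidableEq n]
    (A : Matrix n n ℝ) (hA : (A * Aᵀ).IsHermitian) (l : n → ℝ) (hl : ∀ i, 0 ≤ l i)
    (hsv : ∀ i, l i ^ 2 = hA.eigenvalues i) : |A.det| = ∏ i, l i := by
  have hsq : |A.det| ^ 2 = (∏ i, l i) ^ 2 := by
    have hgram : (A * Aᵀ).det = A.det ^ 2 := by rw [det_mul, det_transpose, sq]
    rw [sq_abs, ← hgram, hA.det_eq_prod_eigenvalues, ← Finset.prod_pow]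
    simp [hsv]
  exact (sq_eq_sq₀ (abs_nonneg _) (Finset.prod_nonneg fun i _ => hl i)).1 hsq

theorem abs_det_eq_prod_singular_and_arccos_le
    {m : ℕ} (α : Matrix (Fin m) (Fin m) ℝ)
    (hA : (α * αᵀ).IsHermitian)
    (l : Fin m → ℝ) (hl : ∀ i, l i ∈ Set.Icc (0:ℝ) 1)
    (hsv : ∀ i, l i ^ 2 = hA.eigenvalues i) :
    |α.det| = ∏ i, l i ∧
      Real.arccos |α.det| ≤ Real.sqrt (∑ i, Real.arccos (l i) ^ 2) := by
  have hdet := α.abs_det_eq_prod_of_sq_eq_eigenvalues hA l (fun i => (hl i).1) hsv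
  exact ⟨hdet, hdet ▸ arccos_prod_le_sqrt_sum Finset.univ l fun i _ => hl i⟩
end
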